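/- For all m, n ∈ ℤ: if f_n = R then Q_{3m,n} = Q_{3m,n+1} and Q_{3m+1,n} = Q_{3m+2,n+1}; if f_n = L then Q_{3m+1,n} = Q_{3m,n+1} and Q_{3m+2,n} = Q_{3m+2,n+1}. Moreover these are the only coincidences between the sequences (Q_{m,n})_{m∈ℤ} and (Q_{m',n+1})_{m'∈ℤ}: if Q_{m,n} = Q_{m',n+1} then the pair (m, m') is one of the pairs listed above. -/

import Mathlib

/-- The relators of the presentation ⟨A, B, C | A² = B² = C² = 1⟩. -/
def rels : Set (FreeGroup (Fin 3)) :=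
  {FreeGroup.of 0 * FreeGroup.of 0, FreeGroup.of 1 * FreeGroup.of 1,
   FreeGroup.of 2 * FreeGroup.of 2}

/-- `G` is the group ⟨A, B, C | A² = B² = C² = 1⟩, the free product of three copies of ℤ/2. -/
abbrev G : Type := PresentedGroup rels

def A : G := PresentedGroup.of 0
def B : G := PresentedGroup.of 1
def C : G := PresentedGroup.of 2

/-- The distinguished element `D = C·B·A`. -/
def D : G := C * B * A

/-!
The automorphisms `R` and `L` fix `D = CBA`, so `f n` acts on `P (3k + i) = Dᵏ X Dᵏ⁻¹`
(`X ∈ {A, B, C}`) through its action on `X`: it sends `P (3k)` and `P (3k + 2)` to terms of `P`,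
and `P (3k + 1)` to `Dᵏ (BCB⁻¹) D⁻ᵏ`, resp. `Dᵏ (BAB⁻¹) D⁻ᵏ`. As `Q m n = Q m' (n + 1)` iff
`P m = f n (P m')`, everything reduces to: `P` is injective and misses those two conjugates.
The letter `X` is read off the mod-2 abelianization. The exponent `k` is read off a representation
by reflections in the sides of an ideal triangle, in which the positive powers of `D` are the
Fibonacci matrices `!![F (2s-1), F (2s); F (2s), F (2s+1)]`; comparing entries shows that these
conjugate none of the relevant reflections into another.
-/

lemma zpow_sub_mul_eq_of_conj_eq {H : Type*} [Group H] {d x y : H} {j k : ℤ}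
    (h : d ^ j * x * (d ^ j)⁻¹ = d ^ k * y * (d ^ k)⁻¹) : d ^ (j - k) * x = y * d ^ (j - k) :=
  calc d ^ (j - k) * x = (d ^ k)⁻¹ * (d ^ j * x * (d ^ j)⁻¹) * d ^ j := by group
    _ = y * d ^ (j - k) := by rw [h]; group

lemma eq_zero_of_zpow_mul_eq_mul_zpow {H : Type*} [Group H] {d x y : H}
    (hxy : ∀ s : ℕ, d ^ (s + 1) * x ≠ y * d ^ (s + 1))
    (hyx : ∀ s : ℕ, d ^ (s + 1) * y ≠ x * d ^ (s + 1)) {t : ℤ} (h : d ^ t * x = y * d ^ t) :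
    t = 0 := by
  rcases lt_trichotomy t 0 with ht | rfl | ht
  · obtain ⟨s, rfl⟩ : ∃ s : ℕ, t = -(s + 1 : ℕ) := ⟨(-t - 1).toNat, by omega⟩
    rw [zpow_neg, zpow_natCast] at h
    refine absurd ?_ (hyx s)
    simpa [mul_assoc] using (congrArg (fun z => d ^ (s + 1) * z * d ^ (s + 1)) h).symm
  · rfl
  · obtain ⟨s, rfl⟩ : ∃ s : ℕ, t = (s + 1 : ℕ) := ⟨(t - 1).toNat, by omega⟩
    rw [zpow_natCast] at h
    exact absurd h (hxy s)

lemma lift_eq_one_of_mem_rels {H : Type*} [Group H] {g : Fin 3 → H} (hg : ∀ i, g i * g i = 1) :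
    ∀ r ∈ rels, FreeGroup.lift g r = 1 := by
  simp only [rels, Set.mem_insert_iff, Set.mem_singleton_iff]
  rintro r (rfl | rfl | rfl) <;> simp [hg]

lemma of_mul_self (i : Fin 3) : (PresentedGroup.of i : G) * PresentedGroup.of i = 1 := by
  rw [PresentedGroup.of, ← map_mul]
  apply PresentedGroup.one_of_mem
  fin_cases i <;> simp [rels]

lemma B_inv : B⁻¹ = B := inv_eq_of_mul_eq_one_right (of_mul_self 1)

def parity : G →* Multiplicative (Fin 3 → ZMod 2) :=
  PresentedGroup.toGroup (f := fun i => .ofAdd (Pi.single i 1))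
    (lift_eq_one_of_mem_rels fun i => by
      rw [← ofAdd_add, ← Pi.single_add, show (1 + 1 : ZMod 2) = 0 from rfl, Pi.single_zero]
      rfl)

lemma parity_of_injective : Function.Injective (parity ∘ PresentedGroup.of) := by
  intro i j h
  by_contra hij
  simp only [Function.comp_apply, parity, PresentedGroup.toGroup.of,
    EmbeddingLike.apply_eq_iff_eq] at h
  simpa [Pi.single_apply, hij] using congrFun h i

lemma parity_conj (g x : G) : parity (g * x * g⁻¹) = parity x := by
  rw [map_mul, map_mul, map_inv, mul_inv_cancel_comm]

/-- Reflections in the sides `Re z = 0`, `Re z = 1`, `|z - 1/2| = 1/2` of the ideal triangle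
`0, 1, ∞`, acting by `z ↦ (a z̄ + b) / (c z̄ + d)`. -/
def reflection : Fin 3 → Matrix (Fin 2) (Fin 2) ℤ :=
  ![!![-1, 0; 0, 1], !![-1, 2; 0, 1], !![1, 0; 2, -1]]

lemma reflection_mul_self (i : Fin 3) : reflection i * reflection i = 1 := by
  fin_cases i <;> simp [reflection, Matrix.one_fin_two]

def toGL : G →* (Matrix (Fin 2) (Fin 2) ℤ)ˣ :=
  PresentedGroup.toGroup
    (f := fun i => ⟨reflection i, reflection i, reflection_mul_self i, reflection_mul_self i⟩)
    (lift_eq_one_of_mem_rels fun i => Units.ext (reflection_mul_self i))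

def toMatrix : G →* Matrix (Fin 2) (Fin 2) ℤ := (Units.coeHom _).comp toGL

lemma toMatrix_of (i : Fin 3) : toMatrix (PresentedGroup.of i) = reflection i := by
  simp [toMatrix, toGL, PresentedGroup.toGroup.of]

lemma toMatrix_D : toMatrix D = !![1, 2; 2, 3] := by
  simp [D, A, B, C, toMatrix_of, reflection]

lemma toMatrix_D_pow_succ (s : ℕ) :
    ∃ x y : ℤ, 0 < x ∧ 0 < y ∧ toMatrix (D ^ (s + 1)) = !![x, y; y, x + y] := by
  induction s with
  | zero => exact ⟨1, 2, by norm_num, by norm_num, by simp [toMatrix_D]⟩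
  | succ s ih =>
    obtain ⟨x, y, hx, hy, h⟩ := ih
    refine ⟨x + 2 * y, 2 * x + 3 * y, by omega, by omega, ?_⟩
    rw [pow_succ, map_mul, h, toMatrix_D, Matrix.mul_fin_two]
    ring_nf

lemma toMatrix_A : toMatrix A = !![-1, 0; 0, 1] := toMatrix_of 0
lemma toMatrix_B : toMatrix B = !![-1, 2; 0, 1] := toMatrix_of 1
lemma toMatrix_C : toMatrix C = !![1, 0; 2, -1] := toMatrix_of 2

lemma toMatrix_B_mul_A_mul_B_inv : toMatrix (B * A * B⁻¹) = !![-1, 4; 0, 1] := by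
  rw [B_inv, map_mul, map_mul, toMatrix_A, toMatrix_B]
  simp

lemma toMatrix_B_mul_C_mul_B_inv : toMatrix (B * C * B⁻¹) = !![-3, 4; -2, 3] := by
  rw [B_inv, map_mul, map_mul, toMatrix_C, toMatrix_B]
  simp

lemma D_pow_succ_mul_ne {x y : G}
    (h : ∀ a b : ℤ, 0 < a → 0 < b →
      !![a, b; b, a + b] * toMatrix x ≠ toMatrix y * !![a, b; b, a + b]) (s : ℕ) :
    D ^ (s + 1) * x ≠ y * D ^ (s + 1) := by
  obtain ⟨a, b, ha, hb, hD⟩ := toMatrix_D_pow_succ s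
  intro hxy
  have := congrArg toMatrix hxy
  rw [map_mul, map_mul, hD] at this
  exact h a b ha hb this

lemma eq_zero_of_D_zpow_mul_of_eq (i : Fin 3) {t : ℤ}
    (h : D ^ t * PresentedGroup.of i = PresentedGroup.of i * D ^ t) : t = 0 := by
  have hi : ∀ s : ℕ, D ^ (s + 1) * PresentedGroup.of i ≠ PresentedGroup.of i * D ^ (s + 1) :=
    D_pow_succ_mul_ne fun a b ha hb => by
      fin_cases i <;> simp [toMatrix_of, reflection] <;> omega
  exact eq_zero_of_zpow_mul_eq_mul_zpow hi hi h

lemma D_zpow_mul_ne {x y : G}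
    (hxy : ∀ a b : ℤ, 0 < a → 0 < b →
      !![a, b; b, a + b] * toMatrix x ≠ toMatrix y * !![a, b; b, a + b])
    (hyx : ∀ a b : ℤ, 0 < a → 0 < b →
      !![a, b; b, a + b] * toMatrix y ≠ toMatrix x * !![a, b; b, a + b])
    (hne : toMatrix x ≠ toMatrix y) (t : ℤ) : D ^ t * x ≠ y * D ^ t := by
  intro h
  obtain rfl := eq_zero_of_zpow_mul_eq_mul_zpow (D_pow_succ_mul_ne hxy) (D_pow_succ_mul_ne hyx) h
  rw [zpow_zero, one_mul, mul_one] at h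
  exact hne (congrArg toMatrix h)

lemma D_zpow_mul_A_ne (t : ℤ) : D ^ t * A ≠ B * A * B⁻¹ * D ^ t := by
  refine D_zpow_mul_ne (fun a b _ _ => ?_) (fun a b _ _ => ?_) ?_ t <;>
    rw [toMatrix_A, toMatrix_B_mul_A_mul_B_inv] <;> simp <;> omega

lemma D_zpow_mul_C_ne (t : ℤ) : D ^ t * C ≠ B * C * B⁻¹ * D ^ t := by
  refine D_zpow_mul_ne (fun a b _ _ => ?_) (fun a b _ _ => ?_) ?_ t <;>
    rw [toMatrix_C, toMatrix_B_mul_C_mul_B_inv] <;> simp <;> omega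

lemma eq_and_eq_of_conj_D_zpow_of_eq {j k : ℤ} {i i' : Fin 3}
    (h : D ^ j * PresentedGroup.of i * (D ^ j)⁻¹ = D ^ k * PresentedGroup.of i' * (D ^ k)⁻¹) :
    j = k ∧ i = i' := by
  obtain rfl : i = i' := parity_of_injective <| by
    simpa only [Function.comp_apply, parity_conj] using congrArg parity h
  exact ⟨sub_eq_zero.1 (eq_zero_of_D_zpow_mul_of_eq i (zpow_sub_mul_eq_of_conj_eq h)), rfl⟩

lemma map_D_of_map_A_eq_A {R : MulAut G}
    (hRA : R A = A) (hRB : R B = B * C * B⁻¹) (hRC : R C = B) : R D = D := by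
  rw [D, map_mul, map_mul, hRA, hRB, hRC, B_inv]
  simp only [← mul_assoc, show B * B = 1 from of_mul_self 1, one_mul]

lemma map_D_of_map_A_eq_B {L : MulAut G}
    (hLA : L A = B) (hLB : L B = B * A * B⁻¹) (hLC : L C = C) : L D = D := by
  rw [D, map_mul, map_mul, hLA, hLB, hLC]
  group

lemma map_conj_D_zpow {σ : MulAut G} (hσ : σ D = D) (k : ℤ) (x : G) :
    σ (D ^ k * x * (D ^ k)⁻¹) = D ^ k * σ x * (D ^ k)⁻¹ := by
  rw [map_mul, map_mul, map_inv, map_zpow, hσ]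

section Sequence

variable {P : ℤ → G}
    (hP0 : ∀ m : ℤ, P (3 * m) = D ^ m * A * (D ^ m)⁻¹)
    (hP1 : ∀ m : ℤ, P (3 * m + 1) = D ^ m * B * (D ^ m)⁻¹)
    (hP2 : ∀ m : ℤ, P (3 * m + 2) = D ^ m * C * (D ^ m)⁻¹)
include hP0 hP1 hP2

lemma exists_eq_conj_D_zpow_of (m : ℤ) :
    ∃ (k : ℤ) (i : Fin 3), m = 3 * k + (i : ℕ) ∧
      P m = D ^ k * PresentedGroup.of i * (D ^ k)⁻¹ := by
  obtain ⟨k, rfl | rfl | rfl⟩ : ∃ k, m = 3 * k ∨ m = 3 * k + 1 ∨ m = 3 * k + 2 :=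
    ⟨m / 3, by omega⟩
  exacts [⟨k, 0, by simp, hP0 k⟩, ⟨k, 1, by simp, hP1 k⟩, ⟨k, 2, by simp, hP2 k⟩]

lemma injective_of_eq_conj_D_zpow : Function.Injective P := by
  intro m m' h
  obtain ⟨j, i, rfl, hj⟩ := exists_eq_conj_D_zpow_of hP0 hP1 hP2 m
  obtain ⟨k, i', rfl, hk⟩ := exists_eq_conj_D_zpow_of hP0 hP1 hP2 m'
  obtain ⟨rfl, rfl⟩ := eq_and_eq_of_conj_D_zpow_of_eq (hj ▸ hk ▸ h)
  rfl

lemma conj_D_zpow_B_mul_A_mul_B_inv_ne (k m : ℤ) :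
    D ^ k * (B * A * B⁻¹) * (D ^ k)⁻¹ ≠ P m := by
  obtain ⟨j, i, -, hj⟩ := exists_eq_conj_D_zpow_of hP0 hP1 hP2 m
  intro h
  rw [hj] at h
  obtain rfl : (0 : Fin 3) = i := parity_of_injective <| by
    simpa only [Function.comp_apply, parity_conj, A] using congrArg parity h
  exact D_zpow_mul_A_ne _ (zpow_sub_mul_eq_of_conj_eq h.symm)

lemma conj_D_zpow_B_mul_C_mul_B_inv_ne (k m : ℤ) :
    D ^ k * (B * C * B⁻¹) * (D ^ k)⁻¹ ≠ P m := by
  obtain ⟨j, i, -, hj⟩ := exists_eq_conj_D_zpow_of hP0 hP1 hP2 m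
  intro h
  rw [hj] at h
  obtain rfl : (2 : Fin 3) = i := parity_of_injective <| by
    simpa only [Function.comp_apply, parity_conj, C] using congrArg parity h
  exact D_zpow_mul_C_ne _ (zpow_sub_mul_eq_of_conj_eq h.symm)

lemma eq_apply_iff_of_map_A_eq_A {R : MulAut G}
    (hRA : R A = A) (hRB : R B = B * C * B⁻¹) (hRC : R C = B) (m m' : ℤ) :
    P m = R (P m') ↔ ∃ k, (m = 3 * k ∧ m' = 3 * k) ∨ (m = 3 * k + 1 ∧ m' = 3 * k + 2) := by
  have hR := map_conj_D_zpow (map_D_of_map_A_eq_A hRA hRB hRC)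
  have hP := injective_of_eq_conj_D_zpow hP0 hP1 hP2
  have hR0 (k : ℤ) : R (P (3 * k)) = P (3 * k) := by rw [hP0, hR, hRA]
  have hR2 (k : ℤ) : R (P (3 * k + 2)) = P (3 * k + 1) := by rw [hP2, hR, hRC, hP1]
  constructor
  · obtain ⟨k, rfl | rfl | rfl⟩ : ∃ k, m' = 3 * k ∨ m' = 3 * k + 1 ∨ m' = 3 * k + 2 :=
      ⟨m' / 3, by omega⟩
    · exact fun h => ⟨k, .inl ⟨hP (h.trans (hR0 k)), rfl⟩⟩
    · rw [hP1, hR, hRB]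
      exact fun h => absurd h.symm (conj_D_zpow_B_mul_C_mul_B_inv_ne hP0 hP1 hP2 k m)
    · exact fun h => ⟨k, .inr ⟨hP (h.trans (hR2 k)), rfl⟩⟩
  · rintro ⟨k, ⟨rfl, rfl⟩ | ⟨rfl, rfl⟩⟩
    exacts [(hR0 k).symm, (hR2 k).symm]

lemma eq_apply_iff_of_map_A_eq_B {L : MulAut G}
    (hLA : L A = B) (hLB : L B = B * A * B⁻¹) (hLC : L C = C) (m m' : ℤ) :
    P m = L (P m') ↔ ∃ k, (m = 3 * k + 1 ∧ m' = 3 * k) ∨ (m = 3 * k + 2 ∧ m' = 3 * k + 2) := by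
  have hL := map_conj_D_zpow (map_D_of_map_A_eq_B hLA hLB hLC)
  have hP := injective_of_eq_conj_D_zpow hP0 hP1 hP2
  have hL0 (k : ℤ) : L (P (3 * k)) = P (3 * k + 1) := by rw [hP0, hL, hLA, hP1]
  have hL2 (k : ℤ) : L (P (3 * k + 2)) = P (3 * k + 2) := by rw [hP2, hL, hLC]
  constructor
  · obtain ⟨k, rfl | rfl | rfl⟩ : ∃ k, m' = 3 * k ∨ m' = 3 * k + 1 ∨ m' = 3 * k + 2 :=
      ⟨m' / 3, by omega⟩
    · exact fun h => ⟨k, .inl ⟨hP (h.trans (hL0 k)), rfl⟩⟩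
    · rw [hP1, hL, hLB]
      exact fun h => absurd h.symm (conj_D_zpow_B_mul_A_mul_B_inv_ne hP0 hP1 hP2 k m)
    · exact fun h => ⟨k, .inr ⟨hP (h.trans (hL2 k)), rfl⟩⟩
  · rintro ⟨k, ⟨rfl, rfl⟩ | ⟨rfl, rfl⟩⟩
    exacts [(hL0 k).symm, (hL2 k).symm]

end Sequence

theorem stmt11_general
    (R L : MulAut G)
    (hRA : R A = A) (hRB : R B = B * C * B⁻¹) (hRC : R C = B)
    (hLA : L A = B) (hLB : L B = B * A * B⁻¹) (hLC : L C = C)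
    (P : ℤ → G)
    (hP0 : ∀ m : ℤ, P (3 * m) = D ^ m * A * (D ^ m)⁻¹)
    (hP1 : ∀ m : ℤ, P (3 * m + 1) = D ^ m * B * (D ^ m)⁻¹)
    (hP2 : ∀ m : ℤ, P (3 * m + 2) = D ^ m * C * (D ^ m)⁻¹)
    (f : ℤ → MulAut G) (hfRL : ∀ n : ℤ, f n = R ∨ f n = L)
    (F : ℤ → MulAut G) (hF : ∀ n : ℤ, F n = F (n - 1) * f n)
    (Q : ℤ → ℤ → G) (hQ : ∀ m n : ℤ, Q m n = F (n - 1) (P m)) :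
    (∀ m n : ℤ,
      (f n = R → Q (3 * m) n = Q (3 * m) (n + 1) ∧ Q (3 * m + 1) n = Q (3 * m + 2) (n + 1)) ∧
      (f n = L → Q (3 * m + 1) n = Q (3 * m) (n + 1) ∧ Q (3 * m + 2) n = Q (3 * m + 2) (n + 1))) ∧
    ∀ n m m' : ℤ, Q m n = Q m' (n + 1) →
      ∃ k : ℤ,
        (f n = R ∧ ((m = 3 * k ∧ m' = 3 * k) ∨ (m = 3 * k + 1 ∧ m' = 3 * k + 2))) ∨
        (f n = L ∧ ((m = 3 * k + 1 ∧ m' = 3 * k) ∨ (m = 3 * k + 2 ∧ m' = 3 * k + 2))) := by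
  have hstep (n m m' : ℤ) : Q m n = Q m' (n + 1) ↔ P m = f n (P m') := by
    rw [hQ, hQ, add_sub_cancel_right, hF n, MulAut.mul_apply, (F (n - 1)).injective.eq_iff]
  have hR := eq_apply_iff_of_map_A_eq_A hP0 hP1 hP2 hRA hRB hRC
  have hL := eq_apply_iff_of_map_A_eq_B hP0 hP1 hP2 hLA hLB hLC
  refine ⟨fun m n => ⟨fun hn => ?_, fun hn => ?_⟩, fun n m m' h => ?_⟩
  · simp only [hstep, hn, hR]
    exact ⟨⟨m, .inl ⟨rfl, rfl⟩⟩, ⟨m, .inr ⟨rfl, rfl⟩⟩⟩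
  · simp only [hstep, hn, hL]
    exact ⟨⟨m, .inl ⟨rfl, rfl⟩⟩, ⟨m, .inr ⟨rfl, rfl⟩⟩⟩
  · rw [hstep] at h
    rcases hfRL n with hn | hn <;> rw [hn] at h
    · obtain ⟨k, hk⟩ := (hR m m').1 h
      exact ⟨k, .inl ⟨hn, hk⟩⟩
    · obtain ⟨k, hk⟩ := (hL m m').1 h
      exact ⟨k, .inr ⟨hn, hk⟩⟩

/-- The identities between consecutive sequences of elliptic generators, and the fact
that they are the only coincidences between the sequences (Q_{·,n}) and (Q_{·,n+1}). -/
theorem stmt11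
    (R L : MulAut G)
    (hRA : R A = A) (hRB : R B = B * C * B⁻¹) (hRC : R C = B)
    (hLA : L A = B) (hLB : L B = B * A * B⁻¹) (hLC : L C = C)
    (P : ℤ → G)
    (hP0 : ∀ m : ℤ, P (3 * m) = D ^ m * A * (D ^ m)⁻¹)
    (hP1 : ∀ m : ℤ, P (3 * m + 1) = D ^ m * B * (D ^ m)⁻¹)
    (hP2 : ∀ m : ℤ, P (3 * m + 2) = D ^ m * C * (D ^ m)⁻¹)
    (p : ℤ) (hp : 2 ≤ p)
    (f : ℤ → MulAut G) (hfRL : ∀ n : ℤ, f n = R ∨ f n = L)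
    (hfper : ∀ n : ℤ, f (n + p) = f n) (hf0 : f 0 = L) (hf1 : f 1 = R)
    (F : ℤ → MulAut G) (hF0 : F 0 = 1) (hF : ∀ n : ℤ, F n = F (n - 1) * f n)
    (Q : ℤ → ℤ → G) (hQ : ∀ m n : ℤ, Q m n = F (n - 1) (P m)) :
    (∀ m n : ℤ,
      (f n = R → Q (3 * m) n = Q (3 * m) (n + 1) ∧ Q (3 * m + 1) n = Q (3 * m + 2) (n + 1)) ∧
      (f n = L → Q (3 * m + 1) n = Q (3 * m) (n + 1) ∧ Q (3 * m + 2) n = Q (3 * m + 2) (n + 1))) ∧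
    ∀ n m m' : ℤ, Q m n = Q m' (n + 1) →
      ∃ k : ℤ,
        (f n = R ∧ ((m = 3 * k ∧ m' = 3 * k) ∨ (m = 3 * k + 1 ∧ m' = 3 * k + 2))) ∨
        (f n = L ∧ ((m = 3 * k + 1 ∧ m' = 3 * k) ∨ (m = 3 * k + 2 ∧ m' = 3 * k + 2))) :=
  stmt11_general R L hRA hRB hRC hLA hLB hLC P hP0 hP1 hP2 f hfRL F hF Q hQ
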